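/- arXiv:1910.10100 — 7 statements merged into one kernel-verified Lean document; each statement's English description precedes it below -/
import Mathlib

section
/- Let A ∈ ℝ^{n×d} be a nonzero matrix with rows a_1,…,a_n, and let S̄ = (S_1,…,S_K) be a partition of {1,…,n} into K pairwise disjoint nonempty blocks. Then the stochastic acceleration factor satisfies Υ(A,S̄,K) := K·L_f/L_b ≥ ‖A‖²/μ_ℓ(A,S̄,K), where L_f := (1/n)‖AᵀA‖, L_b := (K/n)·max_{k∈[K]} ‖(S^k A)ᵀ(S^k A)‖, and μ_ℓ(A,S̄,K) := max_{q∈[K]} max_{j∈S_q} Σ_{k∈S_q} |⟨a_j, a_k⟩|. -/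
/-!
With `Bₖ = SᵏA`, the factor is `Υ = ‖AᵀA‖ / maxₖ ‖BₖᵀBₖ‖ = ‖A‖² / maxₖ ‖BₖᵀBₖ‖`, so it suffices
to show `‖BₖᵀBₖ‖ ≤ μ_ℓ` for every block. As `‖BᵀB‖ = ‖Bᵀ‖²` and `‖Bᵀy‖² = yᵀ(BBᵀ)y`, this is
the Schur test for the symmetric Gram matrix `G = BBᵀ`: from `2|y_j y_k| ≤ y_j² + y_k²`,
`yᵀGy ≤ (maxⱼ ∑ₖ |G_jk|) ‖y‖²`. The denominator is positive because a nonzero row of `A` lies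
in some block.
-/

/-- Spectral norm of a real matrix: the operator norm of the induced linear map
between Euclidean spaces. -/
noncomputable def specNorm {m n : Type*} [Fintype m] [Fintype n] [DecidableEq n]
    (A : Matrix m n ℝ) : ℝ :=
  ‖LinearMap.toContinuousLinearMap (Matrix.toEuclideanLin A)‖

/-- The row-submatrix of `A` consisting of the rows indexed by `S`. -/
def rowSub {n d : ℕ} (A : Matrix (Fin n) (Fin d) ℝ) (S : Finset (Fin n)) :
    Matrix {i // i ∈ S} (Fin d) ℝ :=
  A.submatrix (fun i => (i : Fin n)) id

open Matrix
open scoped Matrix.Norms.L2Operator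

lemma specNorm_eq_l2_opNorm {m n : Type*} [Fintype m] [Fintype n] [DecidableEq n]
    (A : Matrix m n ℝ) : specNorm A = ‖A‖ := rfl

lemma specNorm_transpose_mul_self {m n : Type*} [Fintype m] [Fintype n] [DecidableEq n]
    (A : Matrix m n ℝ) : specNorm (Aᵀ * A) = specNorm A ^ 2 := by
  rw [specNorm_eq_l2_opNorm, specNorm_eq_l2_opNorm, ← conjTranspose_eq_transpose_of_trivial,
    l2_opNorm_conjTranspose_mul_self, sq]

lemma dotProduct_mulVec_le_of_sum_abs_le {m : Type*} [Fintype m] {G : Matrix m m ℝ}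
    (hG : G.IsSymm) {μ : ℝ} (h : ∀ j, ∑ k, |G j k| ≤ μ) (y : m → ℝ) :
    y ⬝ᵥ G *ᵥ y ≤ μ * (y ⬝ᵥ y) := by
  have hswap : ∑ j, ∑ k, |G j k| * y k ^ 2 = ∑ j, ∑ k, |G j k| * y j ^ 2 := by
    rw [Finset.sum_comm]
    simp_rw [hG.apply]
  calc y ⬝ᵥ G *ᵥ y = ∑ j, ∑ k, y j * G j k * y k := by
        simp only [dotProduct, mulVec, Finset.mul_sum, mul_assoc]
    _ ≤ ∑ j, ∑ k, |G j k| * ((y j ^ 2 + y k ^ 2) / 2) := by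
        refine Finset.sum_le_sum fun j _ => Finset.sum_le_sum fun k _ => ?_
        rcases abs_cases (G j k) with ⟨habs, -⟩ | ⟨habs, -⟩ <;> rw [habs]
        · nlinarith [mul_nonneg (abs_nonneg (G j k)) (sq_nonneg (y j - y k))]
        · nlinarith [mul_nonneg (abs_nonneg (G j k)) (sq_nonneg (y j + y k))]
    _ = (∑ j, ∑ k, |G j k| * y j ^ 2 + ∑ j, ∑ k, |G j k| * y k ^ 2) / 2 := by
        simp only [← Finset.sum_add_distrib, Finset.sum_div]
        exact Finset.sum_congr rfl fun j _ => Finset.sum_congr rfl fun k _ => by ring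
    _ = ∑ j, (∑ k, |G j k|) * y j ^ 2 := by
        rw [hswap, add_self_div_two]
        simp only [Finset.sum_mul]
    _ ≤ ∑ j, μ * y j ^ 2 := by gcongr with j; exact h j
    _ = μ * (y ⬝ᵥ y) := by simp only [dotProduct, Finset.mul_sum, sq]

lemma dotProduct_mul_transpose_mulVec {m n α : Type*} [Fintype m] [Fintype n]
    [CommSemiring α] (B : Matrix m n α) (y : m → α) :
    y ⬝ᵥ (B * Bᵀ) *ᵥ y = (Bᵀ *ᵥ y) ⬝ᵥ (Bᵀ *ᵥ y) := by
  rw [← mulVec_mulVec, dotProduct_mulVec, mulVec_transpose]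

lemma specNorm_transpose_mul_self_le_of_sum_abs_le {m n : Type*} [Fintype m] [Fintype n]
    [DecidableEq n] (B : Matrix m n ℝ) {μ : ℝ} (hμ : 0 ≤ μ) (h : ∀ j, ∑ k, |(B * Bᵀ) j k| ≤ μ) :
    specNorm (Bᵀ * B) ≤ μ := by
  classical
  have hsymm : (B * Bᵀ).IsSymm := by rw [IsSymm, transpose_mul, transpose_transpose]
  have hBt : ‖Bᵀ‖ ≤ √μ := by
    refine ContinuousLinearMap.opNorm_le_bound _ (Real.sqrt_nonneg μ) fun y => ?_
    refine (sq_le_sq₀ (by positivity) (by positivity)).mp ?_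
    rw [mul_pow, Real.sq_sqrt hμ, ← real_inner_self_eq_norm_sq, ← real_inner_self_eq_norm_sq]
    simp only [EuclideanSpace.inner_eq_star_dotProduct, star_trivial, LinearEquiv.trans_apply,
      LinearMap.coe_toContinuousLinearMap', ofLp_toLpLin, toLin'_apply]
    rw [← dotProduct_mul_transpose_mulVec]
    exact dotProduct_mulVec_le_of_sum_abs_le hsymm h y.ofLp
  rw [specNorm_transpose_mul_self, specNorm_eq_l2_opNorm, ← l2_opNorm_conjTranspose,
    conjTranspose_eq_transpose_of_trivial]
  calc ‖Bᵀ‖ ^ 2 ≤ √μ ^ 2 := by gcongr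
    _ = μ := Real.sq_sqrt hμ

lemma specNorm_transpose_mul_self_pos {m n : Type*} [Fintype m] [Fintype n] [DecidableEq n]
    {B : Matrix m n ℝ} (hB : B ≠ 0) : 0 < specNorm (Bᵀ * B) := by
  rw [specNorm_transpose_mul_self]
  exact pow_pos (norm_pos_iff.mpr hB) 2

lemma rowSub_ne_zero {n d : ℕ} {A : Matrix (Fin n) (Fin d) ℝ} {S : Finset (Fin n)} {i : Fin n}
    (hi : i ∈ S) (hrow : A i ≠ 0) : rowSub A S ≠ 0 :=
  fun h => hrow (funext fun l => congrFun (congrFun h ⟨i, hi⟩) l)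

lemma specNorm_rowSub_transpose_mul_self_le {n d : ℕ} (A : Matrix (Fin n) (Fin d) ℝ)
    (S : Finset (Fin n)) (hS : S.Nonempty) :
    specNorm ((rowSub A S)ᵀ * rowSub A S) ≤
      S.sup' hS fun j => ∑ k ∈ S, |∑ l, A j l * A k l| := by
  have hcoh_nonneg : 0 ≤ S.sup' hS fun j => ∑ k ∈ S, |∑ l, A j l * A k l| := by
    obtain ⟨j, hj⟩ := hS
    exact Finset.le_sup'_of_le _ hj (by positivity)
  refine specNorm_transpose_mul_self_le_of_sum_abs_le _ hcoh_nonneg fun j => ?_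
  exact (Finset.sum_coe_sort S fun k => |∑ l, A j l * A k l|).trans_le
    (Finset.le_sup' (fun j => ∑ k ∈ S, |∑ l, A j l * A k l|) j.2)

theorem SA_ge_specNorm_sq_div_local_coherence_general {n d K : ℕ} (hn : 0 < n) (hK : 0 < K)
    (A : Matrix (Fin n) (Fin d) ℝ) (hA : A ≠ 0)
    (S : Fin K → Finset (Fin n))
    (hcover : (Finset.univ : Finset (Fin K)).biUnion S = Finset.univ)
    (hne : ∀ k, (S k).Nonempty) :
    (K : ℝ) * (specNorm (A.transpose * A) / n) /
        ((K : ℝ) / n *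
          Finset.univ.sup' ⟨⟨0, hK⟩, Finset.mem_univ _⟩
            (fun k => specNorm ((rowSub A (S k)).transpose * rowSub A (S k)))) ≥
      specNorm A ^ 2 /
        Finset.univ.sup' ⟨⟨0, hK⟩, Finset.mem_univ _⟩
          (fun q => (S q).sup' (hne q) fun j => ∑ k ∈ S q, |∑ l, A j l * A k l|) := by
  set L := Finset.univ.sup' ⟨⟨0, hK⟩, Finset.mem_univ _⟩
    (fun k => specNorm ((rowSub A (S k)).transpose * rowSub A (S k)))
  have hL_le : L ≤ _ :=
    Finset.sup'_mono_fun fun k _ => specNorm_rowSub_transpose_mul_self_le A (S k) (hne k)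
  have hL_pos : 0 < L := by
    obtain ⟨i, hi⟩ := Function.ne_iff.mp hA
    obtain ⟨k, -, hik⟩ := Finset.mem_biUnion.mp (hcover ▸ Finset.mem_univ i)
    exact (Finset.lt_sup'_iff _).mpr
      ⟨k, Finset.mem_univ k, specNorm_transpose_mul_self_pos (rowSub_ne_zero hik hi)⟩
  have hLHS :
      (K : ℝ) * (specNorm (A.transpose * A) / n) / ((K : ℝ) / n * L) = specNorm A ^ 2 / L := by
    rw [specNorm_transpose_mul_self]
    field_simp
  rw [ge_iff_le, hLHS]
  exact div_le_div_of_nonneg_left (sq_nonneg _) hL_pos hL_le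

/-- For a nonzero `A ∈ ℝ^{n×d}` and a partition `S̄ = (S_1, …, S_K)`
of `[n]` into pairwise disjoint nonempty blocks, the stochastic acceleration factor
`Υ(A,S̄,K) = K·L_f/L_b` with `L_f = (1/n)‖AᵀA‖` and
`L_b = (K/n)·max_k ‖(SᵏA)ᵀ(SᵏA)‖` satisfies `Υ(A,S̄,K) ≥ ‖A‖²/μ_ℓ(A,S̄,K)`,
where `μ_ℓ(A,S̄,K) = max_q max_{j ∈ S_q} Σ_{k ∈ S_q} |⟨a_j, a_k⟩|`. -/
theorem SA_ge_specNorm_sq_div_local_coherence {n d K : ℕ} (hn : 0 < n) (hK : 0 < K)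
    (A : Matrix (Fin n) (Fin d) ℝ) (hA : A ≠ 0)
    (S : Fin K → Finset (Fin n))
    (hdisj : ∀ k l : Fin K, k ≠ l → Disjoint (S k) (S l))
    (hcover : (Finset.univ : Finset (Fin K)).biUnion S = Finset.univ)
    (hne : ∀ k, (S k).Nonempty) :
    (K : ℝ) * (specNorm (A.transpose * A) / n) /
        ((K : ℝ) / n *
          Finset.univ.sup' ⟨⟨0, hK⟩, Finset.mem_univ _⟩
            (fun k => specNorm ((rowSub A (S k)).transpose * rowSub A (S k)))) ≥
      specNorm A ^ 2 /
        Finset.univ.sup' ⟨⟨0, hK⟩, Finset.mem_univ _⟩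
          (fun q => (S q).sup' (hne q) fun j => ∑ k ∈ S q, |∑ l, A j l * A k l|) :=
  SA_ge_specNorm_sq_div_local_coherence_general hn hK A hA S hcover hne
end

section
/- Let A ∈ ℝ^{n×d} be a nonzero matrix with rows a_1,…,a_n, let S̄ = (S_1,…,S_K) be a partition of {1,…,n} into K pairwise disjoint blocks, each of equal size m = n/K, and suppose ρ ≥ 1 satisfies max_{i∈[n]} ‖a_i‖₂² ≤ ρ·(1/n)·Σ_{j=1}^n ‖a_j‖₂². Then Υ(A,S̄,K) := K·L_f/L_b ≥ K·σ(AᵀA,1)/(ρ·Σ_{i=1}^d σ(AᵀA,i)), where L_f := (1/n)‖AᵀA‖, L_b := (K/n)·max_{k∈[K]} ‖(S^k A)ᵀ(S^k A)‖, and σ(H,k) denotes the k-th largest eigenvalue of a real symmetric matrix H. -/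
/-- `kthEigen H k` is the `k`-th largest eigenvalue of a real symmetric matrix `H`
(for `1 ≤ k`), with the convention that it is `0` when `k` exceeds the dimension
(or when `H` is not symmetric). -/
noncomputable def kthEigen {d : ℕ} (H : Matrix (Fin d) (Fin d) ℝ) (k : ℕ) : ℝ :=
  letI := Classical.dec H.IsHermitian
  if h : H.IsHermitian then
    ((Finset.univ.val.map h.eigenvalues).sort (· ≤ ·)).reverse.getD (k - 1) 0
  else 0

/-!
Since the blocks have `m = n / K` rows and every row has energy at most `ρ T / n`, where
`T = ∑ᵢ ‖aᵢ‖² = tr (AᵀA)`, each block Gram matrix has spectral norm at most its Frobenius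
bound `m ρ T / n = ρ T / K`. Hence `L_b ≤ ρ T / n`, while `L_f ≥ σ(AᵀA, 1) / n` and the
eigenvalues of `AᵀA` sum to its trace `T`.
-/

open Finset
open scoped Matrix Matrix.Norms.L2Operator

theorem List.sum_range_length_getD {M : Type*} [AddCommMonoid M] (L : List M) :
    ∑ i ∈ Finset.range L.length, L.getD i 0 = L.sum := by
  rw [Finset.sum_range, ← Fin.sum_univ_getElem]
  exact sum_congr rfl fun i _ => L.getD_eq_getElem 0 i.2

namespace Matrix

variable {m n : Type*} [Fintype m] [Fintype n]

theorem trace_transpose_mul_self {R : Type*} [Semiring R] (M : Matrix m n R) :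
    (Mᵀ * M).trace = ∑ i, ∑ j, M i j ^ 2 := by
  simp only [trace, diag, mul_apply, transpose_apply, sq]
  exact sum_comm

variable [DecidableEq n]

theorem specNorm_eq_l2_opNorm (M : Matrix m n ℝ) : specNorm M = ‖M‖ := rfl

theorem l2_opNorm_sq_le_sum_sq (M : Matrix m n ℝ) : ‖M‖ ^ 2 ≤ ∑ i, ∑ j, M i j ^ 2 := by
  set F := ∑ i, ∑ j, M i j ^ 2
  suffices ‖M‖ ≤ √F by
    simpa [Real.sq_sqrt (by positivity : 0 ≤ F)] using pow_le_pow_left₀ (norm_nonneg M) this 2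
  refine ContinuousLinearMap.opNorm_le_bound _ (Real.sqrt_nonneg F) fun x => ?_
  rw [EuclideanSpace.norm_eq, EuclideanSpace.norm_eq, ← Real.sqrt_mul (by positivity)]
  refine Real.sqrt_le_sqrt ?_
  simp only [Real.norm_eq_abs, sq_abs, F]
  rw [sum_mul]
  exact sum_le_sum fun i _ => sum_mul_sq_le_sq_mul_sq univ (M i) x

theorem l2_opNorm_transpose_mul_self (M : Matrix m n ℝ) : ‖Mᵀ * M‖ = ‖M‖ ^ 2 := by
  rw [← conjTranspose_eq_transpose_of_trivial, l2_opNorm_conjTranspose_mul_self, sq]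

theorem IsHermitian.eigenvalues_le_l2_opNorm {H : Matrix n n ℝ} (hH : H.IsHermitian) (i : n) :
    hH.eigenvalues i ≤ ‖H‖ :=
  have : Nonempty n := ⟨i⟩
  (le_abs_self _).trans (spectrum.norm_le_norm_of_mem (hH.eigenvalues_mem_spectrum_real i))

end Matrix

namespace Matrix.IsHermitian

variable {d : ℕ} {H : Matrix (Fin d) (Fin d) ℝ}

noncomputable def eigenvaluesDesc (hH : H.IsHermitian) : List ℝ :=
  ((univ.val.map hH.eigenvalues).sort (· ≤ ·)).reverse

theorem length_eigenvaluesDesc (hH : H.IsHermitian) : hH.eigenvaluesDesc.length = d := by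
  simp [eigenvaluesDesc]

theorem mem_eigenvaluesDesc (hH : H.IsHermitian) {x : ℝ} :
    x ∈ hH.eigenvaluesDesc ↔ x ∈ Set.range hH.eigenvalues := by
  simp [eigenvaluesDesc]

theorem sum_eigenvaluesDesc (hH : H.IsHermitian) :
    hH.eigenvaluesDesc.sum = ∑ i, hH.eigenvalues i := by
  rw [eigenvaluesDesc, List.sum_reverse, ← Multiset.sum_coe, Multiset.sort_eq]
  rfl

theorem kthEigen_eq_getD (hH : H.IsHermitian) (k : ℕ) :
    kthEigen H k = hH.eigenvaluesDesc.getD (k - 1) 0 :=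
  dif_pos hH

end Matrix.IsHermitian

section kthEigen

variable {d : ℕ} {H : Matrix (Fin d) (Fin d) ℝ}

theorem kthEigen_eq_zero_or_mem_range (hH : H.IsHermitian) (k : ℕ) :
    kthEigen H k = 0 ∨ kthEigen H k ∈ Set.range hH.eigenvalues := by
  rw [hH.kthEigen_eq_getD, ← hH.mem_eigenvaluesDesc]
  by_cases hk : k - 1 < hH.eigenvaluesDesc.length
  · exact .inr (List.getD_eq_getElem _ 0 hk ▸ List.getElem_mem hk)
  · exact .inl (List.getD_eq_default _ 0 (not_lt.1 hk))

theorem kthEigen_nonneg (hH : H.PosSemidef) (k : ℕ) : 0 ≤ kthEigen H k := by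
  rcases kthEigen_eq_zero_or_mem_range hH.1 k with h | ⟨i, h⟩
  · exact h.ge
  · exact h ▸ hH.eigenvalues_nonneg i

theorem kthEigen_le_l2_opNorm (hH : H.IsHermitian) (k : ℕ) : kthEigen H k ≤ ‖H‖ := by
  rcases kthEigen_eq_zero_or_mem_range hH k with h | ⟨i, h⟩
  · exact h ▸ norm_nonneg H
  · exact h ▸ hH.eigenvalues_le_l2_opNorm i

theorem sum_Icc_kthEigen (hH : H.IsHermitian) : ∑ i ∈ Icc 1 d, kthEigen H i = H.trace := by
  calc ∑ i ∈ Icc 1 d, kthEigen H i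
      = ∑ i ∈ range hH.eigenvaluesDesc.length, hH.eigenvaluesDesc.getD i 0 := by
        rw [hH.length_eigenvaluesDesc, show Icc 1 d = Ico 1 (d + 1) from rfl,
          sum_Ico_eq_sum_range]
        simp [hH.kthEigen_eq_getD]
    _ = ∑ i, hH.eigenvalues i := by
        rw [List.sum_range_length_getD, hH.sum_eigenvaluesDesc]
    _ = H.trace := by simp [hH.trace_eq_sum_eigenvalues]

end kthEigen

section rowSub

variable {n d : ℕ} {A : Matrix (Fin n) (Fin d) ℝ} {S : Finset (Fin n)}

theorem l2_opNorm_rowSub_gram_le {c : ℝ} (hrow : ∀ i ∈ S, ∑ l, A i l ^ 2 ≤ c) :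
    ‖(rowSub A S)ᵀ * rowSub A S‖ ≤ S.card * c :=
  calc ‖(rowSub A S)ᵀ * rowSub A S‖ = ‖rowSub A S‖ ^ 2 := Matrix.l2_opNorm_transpose_mul_self _
    _ ≤ ∑ i, ∑ l, rowSub A S i l ^ 2 := Matrix.l2_opNorm_sq_le_sum_sq _
    _ = ∑ i ∈ S, ∑ l, A i l ^ 2 := sum_coe_sort S fun i => ∑ l, A i l ^ 2
    _ ≤ ∑ _i ∈ S, c := sum_le_sum hrow
    _ = S.card * c := by rw [sum_const, nsmul_eq_mul]

theorem l2_opNorm_rowSub_gram_pos {i : Fin n} (hi : i ∈ S) {l : Fin d} (hil : A i l ≠ 0) :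
    0 < ‖(rowSub A S)ᵀ * rowSub A S‖ := by
  have hne : rowSub A S ≠ 0 := fun h => hil (congrFun (congrFun h ⟨i, hi⟩) l)
  rw [Matrix.l2_opNorm_transpose_mul_self]
  exact pow_pos (norm_pos_iff.2 hne) 2

end rowSub

theorem SA_ge_spectral_bound_general {n d K m : ℕ} (hn : 0 < n) (hK : 0 < K)
    (A : Matrix (Fin n) (Fin d) ℝ) (hA : A ≠ 0)
    (S : Fin K → Finset (Fin n))
    (hcover : (Finset.univ : Finset (Fin K)).biUnion S = Finset.univ)
    (hcard : ∀ k, (S k).card = m) (hnKm : n = K * m)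
    (ρ : ℝ)
    (hbal : Finset.univ.sup' ⟨⟨0, hn⟩, Finset.mem_univ _⟩ (fun i => ∑ l, (A i l) ^ 2) ≤
      ρ * ((1 / (n : ℝ)) * ∑ j, ∑ l, (A j l) ^ 2)) :
    (K : ℝ) * (specNorm (A.transpose * A) / n) /
        ((K : ℝ) / n *
          Finset.univ.sup' ⟨⟨0, hK⟩, Finset.mem_univ _⟩
            (fun k => specNorm ((rowSub A (S k)).transpose * rowSub A (S k)))) ≥
      (K : ℝ) * kthEigen (A.transpose * A) 1 /
        (ρ * ∑ i ∈ Finset.Icc 1 d, kthEigen (A.transpose * A) i) := by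
  have hPSD : (Aᵀ * A).PosSemidef := by
    simpa using Matrix.posSemidef_conjTranspose_mul_self A
  set T := ∑ j, ∑ l, A j l ^ 2
  set blockNorm := fun k => specNorm ((rowSub A (S k))ᵀ * rowSub A (S k))
  set D := univ.sup' ⟨⟨0, hK⟩, mem_univ _⟩ blockNorm
  have hsum : ∑ i ∈ Icc 1 d, kthEigen (Aᵀ * A) i = T := by
    rw [sum_Icc_kthEigen hPSD.1, Matrix.trace_transpose_mul_self]
  have hD_le : D ≤ ρ * T / K := by
    have hm : (m : ℝ) ≠ 0 := by
      rw [Nat.cast_ne_zero]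
      rintro rfl
      omega
    refine sup'_le _ _ fun k _ => (l2_opNorm_rowSub_gram_le fun i _ =>
      (le_sup' (fun i => ∑ l, A i l ^ 2) (mem_univ i)).trans hbal).trans_eq ?_
    rw [hcard, hnKm]
    push_cast
    field_simp
  have hD_pos : 0 < D := by
    obtain ⟨i, l, hil⟩ : ∃ i l, A i l ≠ 0 := by simpa [← Matrix.ext_iff] using hA
    obtain ⟨k, -, hik⟩ := mem_biUnion.1 (hcover ▸ mem_univ i)
    exact (l2_opNorm_rowSub_gram_pos hik hil).trans_le (le_sup' blockNorm (mem_univ k))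
  rw [ge_iff_le, hsum]
  calc (K : ℝ) * kthEigen (Aᵀ * A) 1 / (ρ * T) = kthEigen (Aᵀ * A) 1 / (ρ * T / K) := by
        rw [div_div_eq_mul_div, mul_comm]
    _ ≤ kthEigen (Aᵀ * A) 1 / D :=
        div_le_div_of_nonneg_left (kthEigen_nonneg hPSD 1) hD_pos hD_le
    _ ≤ ‖Aᵀ * A‖ / D := div_le_div_of_nonneg_right (kthEigen_le_l2_opNorm hPSD.1 1) hD_pos.le
    _ = K * (specNorm (Aᵀ * A) / n) / (K / n * D) := by
        have : (n : ℝ) ≠ 0 := by positivity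
        have : (K : ℝ) ≠ 0 := by positivity
        rw [Matrix.specNorm_eq_l2_opNorm]
        field_simp

/-- For a nonzero `A ∈ ℝ^{n×d}` with balanced rows
(`max_i ‖a_i‖₂² ≤ ρ·(1/n)·Σ_j ‖a_j‖₂²`, `ρ ≥ 1`) and a partition of `[n]` into `K`
pairwise disjoint blocks of equal size `m = n/K`, the stochastic acceleration factor
`Υ(A,S̄,K) = K·L_f/L_b` satisfies
`Υ(A,S̄,K) ≥ K·σ(AᵀA,1)/(ρ·Σ_{i=1}^d σ(AᵀA,i))`. -/
theorem SA_ge_spectral_bound {n d K m : ℕ} (hn : 0 < n) (hK : 0 < K)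
    (A : Matrix (Fin n) (Fin d) ℝ) (hA : A ≠ 0)
    (S : Fin K → Finset (Fin n))
    (hdisj : ∀ k l : Fin K, k ≠ l → Disjoint (S k) (S l))
    (hcover : (Finset.univ : Finset (Fin K)).biUnion S = Finset.univ)
    (hcard : ∀ k, (S k).card = m) (hnKm : n = K * m)
    (ρ : ℝ) (hρ : 1 ≤ ρ)
    (hbal : Finset.univ.sup' ⟨⟨0, hn⟩, Finset.mem_univ _⟩ (fun i => ∑ l, (A i l) ^ 2) ≤
      ρ * ((1 / (n : ℝ)) * ∑ j, ∑ l, (A j l) ^ 2)) :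
    (K : ℝ) * (specNorm (A.transpose * A) / n) /
        ((K : ℝ) / n *
          Finset.univ.sup' ⟨⟨0, hK⟩, Finset.mem_univ _⟩
            (fun k => specNorm ((rowSub A (S k)).transpose * rowSub A (S k)))) ≥
      (K : ℝ) * kthEigen (A.transpose * A) 1 /
        (ρ * ∑ i ∈ Finset.Icc 1 d, kthEigen (A.transpose * A) i) :=
  SA_ge_spectral_bound_general hn hK A hA S hcover hcard hnKm ρ hbal
end

section
/- Let A ∈ ℝ^{n×d}, and let S̄ = (S_1,…,S_K) be any partition of {1,…,n} into K pairwise disjoint blocks, each of equal size m = n/K. If σ(AᵀA, n − n/K + 1) > 0, then Υ(A,S̄,K) := K·L_f/L_b ≤ σ(AᵀA, 1)/σ(AᵀA, n − n/K + 1), where L_f := (1/n)‖AᵀA‖, L_b := (K/n)·max_{k∈[K]} ‖(S^k A)ᵀ(S^k A)‖, and σ(H,k) denotes the k-th largest eigenvalue of a real symmetric matrix H, with σ(H,k) := 0 when k exceeds its dimension. -/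
/-!
Let `H = AᵀA` and let `s` be any block. Splitting the rows of `A` along `s` gives `H = B + C` with
`B = (S^s A)ᵀ(S^s A)` and `rank C ≤ n - m`. On `ker C`, of codimension at most `n - m`, the
quadratic form of `H` is that of `B`, so the min-max principle gives
`σ(H, n - m + 1) ≤ ‖B‖ ≤ max_k ‖(S^k A)ᵀ(S^k A)‖`. As `H` is positive semidefinite, `‖H‖ = σ(H, 1)`,
and `Υ = ‖H‖ / max_k ‖(S^k A)ᵀ(S^k A)‖` once `K / n` cancels.
-/

open scoped RealInnerProductSpace
open Module Submodule

lemma OrthonormalBasis.repr_eq_zero_of_mem_span_image {𝕜 E ι : Type*} [RCLike 𝕜]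
    [NormedAddCommGroup E] [InnerProductSpace 𝕜 E] [Fintype ι] (b : OrthonormalBasis ι 𝕜 E)
    {s : Set ι} {x : E} (hx : x ∈ span 𝕜 (b '' s)) {i : ι} (hi : i ∉ s) : b.repr x i = 0 := by
  obtain ⟨l, hl, rfl⟩ := (Finsupp.mem_span_image_iff_linearCombination 𝕜).mp hx
  rw [b.repr_apply_apply, inner_eq_zero_symm]
  exact b.orthonormal.inner_finsupp_eq_zero hi hl

namespace LinearMap.IsSymmetric

variable {E : Type*} [NormedAddCommGroup E] [InnerProductSpace ℝ E] [FiniteDimensional ℝ E]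
  {T : E →ₗ[ℝ] E} (hT : T.IsSymmetric) {n : ℕ} (hn : finrank ℝ E = n)

lemma inner_apply_self_eq_sum (x : E) :
    ⟪T x, x⟫ = ∑ i, hT.eigenvalues hn i * (hT.eigenvectorBasis hn).repr x i ^ 2 := by
  rw [← (hT.eigenvectorBasis hn).repr.inner_map_map, PiLp.inner_apply]
  simp only [eigenvectorBasis_apply_self_apply, RCLike.inner_apply, conj_trivial,
    RCLike.ofReal_real_eq_id, id_eq]
  exact Finset.sum_congr rfl fun i _ => by ring

lemma finrank_span_eigenvectorBasis_image_Iic (i : Fin n) :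
    finrank ℝ (span ℝ (hT.eigenvectorBasis hn '' Set.Iic i)) = i + 1 := by
  have hli := (hT.eigenvectorBasis hn).orthonormal.linearIndependent.comp
    ((↑) : Set.Iic i → Fin n) Subtype.coe_injective
  rw [Set.image_eq_range]
  refine (finrank_span_eq_card hli).trans ?_
  rw [← Set.toFinset_card]
  simp

lemma eigenvalues_mul_norm_sq_le_inner {i : Fin n} {x : E}
    (hx : x ∈ span ℝ (hT.eigenvectorBasis hn '' Set.Iic i)) :
    hT.eigenvalues hn i * ‖x‖ ^ 2 ≤ ⟪T x, x⟫ := by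
  rw [hT.inner_apply_self_eq_sum hn, ← (hT.eigenvectorBasis hn).repr.norm_map,
    EuclideanSpace.norm_sq_eq, Finset.mul_sum]
  refine Finset.sum_le_sum fun j _ => ?_
  rcases le_or_gt j i with hji | hij
  · simpa using mul_le_mul_of_nonneg_right (hT.eigenvalues_antitone hn hji) (sq_nonneg _)
  · simp [OrthonormalBasis.repr_eq_zero_of_mem_span_image _ hx (Set.notMem_Iic.mpr hij)]

/-- The easy half of the Courant–Fischer min-max principle: the span of the top `i + 1`
eigenvectors meets `W` nontrivially. -/
lemma eigenvalues_le_of_forall_inner_le {W : Submodule ℝ E} {i : Fin n}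
    (hW : n ≤ finrank ℝ W + i) {c : ℝ} (hc : ∀ x ∈ W, ⟪T x, x⟫ ≤ c * ‖x‖ ^ 2) :
    hT.eigenvalues hn i ≤ c := by
  obtain ⟨x, hxV, hxW, hx0⟩ :
      ∃ x ∈ span ℝ (hT.eigenvectorBasis hn '' Set.Iic i), x ∈ W ∧ x ≠ 0 := by
    by_contra! h
    have := finrank_add_finrank_le_of_disjoint (disjoint_def.mpr h)
    rw [hT.finrank_span_eigenvectorBasis_image_Iic hn, hn] at this
    omega
  have hx : 0 < ‖x‖ ^ 2 := by positivity
  exact le_of_mul_le_mul_right ((hT.eigenvalues_mul_norm_sq_le_inner hn hxV).trans (hc x hxW)) hx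

end LinearMap.IsSymmetric

namespace Matrix

variable {ι : Type*} [Fintype ι] [DecidableEq ι]

lemma IsHermitian.univ_val_map_eigenvalues {H : Matrix ι ι ℝ} (h : H.IsHermitian) :
    Finset.univ.val.map h.eigenvalues = Finset.univ.val.map h.eigenvalues₀ := by
  rw [show h.eigenvalues = h.eigenvalues₀ ∘ _ from rfl, ← Multiset.map_map,
    Multiset.map_univ_val_equiv]

lemma rank_eq_finrank_range_toEuclideanLin (C : Matrix ι ι ℝ) :
    C.rank = finrank ℝ (LinearMap.range (toEuclideanLin C)) := by
  rw [toEuclideanLin_eq_toLin_orthonormal, ← rank_eq_finrank_range_toLin]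

end Matrix

lemma kthEigen_succ {d : ℕ} {H : Matrix (Fin d) (Fin d) ℝ} (h : H.IsHermitian) (k : ℕ) :
    kthEigen H (k + 1) =
      if hk : k < Fintype.card (Fin d) then h.eigenvalues₀ ⟨k, hk⟩ else 0 := by
  have hsort : (Finset.univ.val.map h.eigenvalues).sort (· ≤ ·) =
      (List.ofFn h.eigenvalues₀).reverse := by
    rw [h.univ_val_map_eigenvalues, Fin.univ_val_map, ← Multiset.coe_reverse, Multiset.coe_sort]
    apply List.mergeSort_of_pairwise
    simpa [List.pairwise_reverse] using h.eigenvalues₀_antitone.sortedGE_ofFn.pairwise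
  rw [kthEigen, dif_pos h, hsort, List.reverse_reverse, Nat.add_sub_cancel]
  split_ifs with hk
  · rw [List.getD_eq_getElem _ _ (by simpa using hk), List.getElem_ofFn]
  · exact List.getD_eq_default _ _ (by simpa using hk)

section specNorm

variable {ι : Type*} [Fintype ι] [DecidableEq ι]

lemma specNorm_apply_le {κ : Type*} [Fintype κ] (B : Matrix κ ι ℝ) (x : EuclideanSpace ℝ ι) :
    ‖Matrix.toEuclideanLin B x‖ ≤ specNorm B * ‖x‖ :=
  (LinearMap.toContinuousLinearMap (Matrix.toEuclideanLin B)).le_opNorm x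

open scoped Matrix.Norms.L2Operator in
lemma specNorm_eq_norm_eigenvalues {H : Matrix ι ι ℝ} (h : H.IsHermitian) :
    specNorm H = ‖h.eigenvalues‖ := by
  change ‖H‖ = _
  conv_lhs => rw [h.spectral_theorem, Unitary.conjStarAlgAut_apply]
  rw [← Unitary.coe_star, CStarRing.norm_mul_coe_unitary, CStarRing.norm_coe_unitary_mul]
  simp

lemma specNorm_le_eigenvalues₀_zero {H : Matrix ι ι ℝ} (hH : H.PosSemidef)
    (hι : 0 < Fintype.card ι) : specNorm H ≤ hH.isHermitian.eigenvalues₀ ⟨0, hι⟩ := by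
  have hle : ∀ j, hH.isHermitian.eigenvalues j ≤ hH.isHermitian.eigenvalues₀ ⟨0, hι⟩ :=
    fun j => hH.isHermitian.eigenvalues₀_antitone (Fin.le_def.mpr (Nat.zero_le _))
  obtain ⟨j₀⟩ := Fintype.card_pos_iff.mp hι
  rw [specNorm_eq_norm_eigenvalues hH.isHermitian,
    pi_norm_le_iff_of_nonneg ((hH.eigenvalues_nonneg j₀).trans (hle j₀))]
  exact fun j => (Real.norm_of_nonneg (hH.eigenvalues_nonneg j)).trans_le (hle j)

/-- Weyl's inequality for a perturbation of rank at most `i`. -/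
lemma eigenvalues₀_le_specNorm_of_rank_le {H B C : Matrix ι ι ℝ} (hH : H.IsHermitian)
    (hHBC : H = B + C) {i : Fin (Fintype.card ι)} (hC : C.rank ≤ i) :
    hH.eigenvalues₀ i ≤ specNorm B := by
  refine LinearMap.IsSymmetric.eigenvalues_le_of_forall_inner_le _ _
    (W := LinearMap.ker (Matrix.toEuclideanLin C)) ?_ fun x hx => ?_
  · have := LinearMap.finrank_range_add_finrank_ker (Matrix.toEuclideanLin C)
    rw [← Matrix.rank_eq_finrank_range_toEuclideanLin, finrank_euclideanSpace] at this
    omega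
  · rw [LinearMap.mem_ker] at hx
    calc ⟪Matrix.toEuclideanLin H x, x⟫ = ⟪Matrix.toEuclideanLin B x, x⟫ := by
          rw [hHBC, map_add, LinearMap.add_apply, hx, add_zero]
      _ ≤ ‖Matrix.toEuclideanLin B x‖ * ‖x‖ := real_inner_le_norm _ _
      _ ≤ specNorm B * ‖x‖ * ‖x‖ := by gcongr; exact specNorm_apply_le B x
      _ = specNorm B * ‖x‖ ^ 2 := by ring

end specNorm

lemma transpose_mul_self_eq_rowSub_add_rowSub_compl {n d : ℕ} (A : Matrix (Fin n) (Fin d) ℝ)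
    (s : Finset (Fin n)) :
    A.transpose * A = (rowSub A s).transpose * rowSub A s
      + (rowSub A sᶜ).transpose * rowSub A sᶜ := by
  ext p q
  simp only [Matrix.add_apply, Matrix.mul_apply, Matrix.transpose_apply, rowSub,
    Matrix.submatrix_apply, id]
  rw [Finset.sum_coe_sort s (fun i => A i p * A i q),
    Finset.sum_coe_sort sᶜ (fun i => A i p * A i q),
    Finset.sum_add_sum_compl s (fun i => A i p * A i q)]

lemma rank_rowSub_le {n d : ℕ} (A : Matrix (Fin n) (Fin d) ℝ) (s : Finset (Fin n)) :
    (rowSub A s).rank ≤ s.card :=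
  (Matrix.rank_le_card_height _).trans_eq (Fintype.card_coe s)

lemma mul_div_div_mul_le_div {a M : ℝ} (ha : 0 ≤ a) (hM : 0 ≤ M) (K n : ℝ) :
    K * (a / n) / (K / n * M) ≤ a / M := by
  rcases eq_or_ne K 0 with rfl | hK
  · simp only [zero_mul, zero_div]
    positivity
  rcases eq_or_ne n 0 with rfl | hn
  · simp only [div_zero, mul_zero, zero_mul, div_zero]
    positivity
  · exact (by field_simp : K * (a / n) / (K / n * M) = a / M).le

theorem SA_le_spectral_upper_bound_general {n d K m : ℕ} (hK : 0 < K)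
    (A : Matrix (Fin n) (Fin d) ℝ)
    (S : Fin K → Finset (Fin n))
    (hcard : ∀ k, (S k).card = m)
    (hσ : 0 < kthEigen (A.transpose * A) (n - m + 1)) :
    (K : ℝ) * (specNorm (A.transpose * A) / n) /
        ((K : ℝ) / n *
          Finset.univ.sup' ⟨⟨0, hK⟩, Finset.mem_univ _⟩
            (fun k => specNorm ((rowSub A (S k)).transpose * rowSub A (S k)))) ≤
      kthEigen (A.transpose * A) 1 / kthEigen (A.transpose * A) (n - m + 1) := by
  have hH : (A.transpose * A).PosSemidef := by
    simpa using Matrix.posSemidef_conjTranspose_mul_self A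
  have hk : n - m < Fintype.card (Fin d) := by
    by_contra hk
    rw [kthEigen_succ hH.isHermitian, dif_neg hk] at hσ
    exact hσ.false
  set s := S ⟨0, hK⟩
  have hweyl : kthEigen (A.transpose * A) (n - m + 1) ≤
      specNorm ((rowSub A s).transpose * rowSub A s) := by
    rw [kthEigen_succ hH.isHermitian, dif_pos hk]
    refine eigenvalues₀_le_specNorm_of_rank_le _
      (transpose_mul_self_eq_rowSub_add_rowSub_compl A s) ?_
    rw [Matrix.rank_transpose_mul_self]
    exact (rank_rowSub_le A sᶜ).trans_eq (by simp [Finset.card_compl, s, hcard])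
  have htop : specNorm (A.transpose * A) ≤ kthEigen (A.transpose * A) 1 := by
    rw [← zero_add 1, kthEigen_succ hH.isHermitian, dif_pos (Nat.zero_lt_of_lt hk)]
    exact specNorm_le_eigenvalues₀_zero hH _
  have hM := Finset.le_sup' (fun k => specNorm ((rowSub A (S k)).transpose * rowSub A (S k)))
    (Finset.mem_univ ⟨0, hK⟩)
  refine (mul_div_div_mul_le_div (norm_nonneg _) (hσ.le.trans (hweyl.trans hM)) _ _).trans ?_
  exact div_le_div₀ ((norm_nonneg _).trans htop) htop hσ (hweyl.trans hM)

/-- For `A ∈ ℝ^{n×d}` and any partition of `[n]` into `K`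
pairwise disjoint blocks of equal size `m = n/K`, if `σ(AᵀA, n − n/K + 1) > 0` then
the stochastic acceleration factor `Υ(A,S̄,K) = K·L_f/L_b` is at most
`σ(AᵀA, 1)/σ(AᵀA, n − n/K + 1)`. -/
theorem SA_le_spectral_upper_bound {n d K m : ℕ} (hn : 0 < n) (hK : 0 < K)
    (A : Matrix (Fin n) (Fin d) ℝ)
    (S : Fin K → Finset (Fin n))
    (hdisj : ∀ k l : Fin K, k ≠ l → Disjoint (S k) (S l))
    (hcover : (Finset.univ : Finset (Fin K)).biUnion S = Finset.univ)
    (hcard : ∀ k, (S k).card = m) (hnKm : n = K * m)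
    (hσ : 0 < kthEigen (A.transpose * A) (n - m + 1)) :
    (K : ℝ) * (specNorm (A.transpose * A) / n) /
        ((K : ℝ) / n *
          Finset.univ.sup' ⟨⟨0, hK⟩, Finset.mem_univ _⟩
            (fun k => specNorm ((rowSub A (S k)).transpose * rowSub A (S k)))) ≤
      kthEigen (A.transpose * A) 1 / kthEigen (A.transpose * A) (n - m + 1) :=
  SA_le_spectral_upper_bound_general hK A S hcard hσ
end

section
/- Let A ∈ ℝ^{n×d} and let S ⊆ {1,…,n} be a subset of size m ≤ n. Then the row-submatrix A_S of A with rows indexed by S satisfies ‖(A_S)ᵀ A_S‖ ≥ σ(AᵀA, n − m + 1), where ‖·‖ is the spectral norm and σ(H,k) denotes the k-th largest eigenvalue of a real symmetric matrix H (with σ(H,k) := 0 when k exceeds its dimension). -/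
open scoped InnerProductSpace Matrix

theorem List.le_countP_getD_le_of_pairwise {α : Type*} [LinearOrder α] {l : List α}
    (hl : l.Pairwise (· ≥ ·)) {k : ℕ} (hk : k ≤ l.length) (a : α) :
    k ≤ l.countP (fun x => l.getD (k - 1) a ≤ x) := by
  obtain rfl | hk0 := k.eq_zero_or_pos
  · exact Nat.zero_le _
  have htake : ∀ x ∈ l.take k, l.getD (k - 1) a ≤ x := by
    intro x hx
    obtain ⟨i, hi, rfl⟩ := List.getElem_of_mem hx
    rw [List.length_take] at hi
    rw [List.getElem_take, List.getD_eq_getElem _ _ (by omega)]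
    exact hl.rel_get_of_le (a := ⟨i, by omega⟩) (b := ⟨k - 1, by omega⟩) (by simp; omega)
  calc k = (l.take k).countP (fun x => l.getD (k - 1) a ≤ x) := by
        rw [List.countP_eq_length.mpr (by simpa using htake), List.length_take]; omega
    _ ≤ _ := (List.take_sublist k l).countP_le

theorem Multiset.le_countP_sort_reverse_getD_le {α : Type*} [LinearOrder α] (s : Multiset α)
    {k : ℕ} (hk : k ≤ Multiset.card s) (a : α) :
    k ≤ s.countP (fun x => ((s.sort (· ≤ ·)).reverse.getD (k - 1) a) ≤ x) := by
  set l := (s.sort (· ≤ ·)).reverse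
  have hl : l.Pairwise (· ≥ ·) := List.pairwise_reverse.mpr (s.pairwise_sort _)
  calc k ≤ l.countP (fun x => l.getD (k - 1) a ≤ x) :=
        List.le_countP_getD_le_of_pairwise hl (by simpa [l] using hk) a
    _ = (s.sort (· ≤ ·)).countP (fun x => l.getD (k - 1) a ≤ x) := List.countP_reverse
    _ = _ := by rw [← Multiset.coe_countP, Multiset.sort_eq]

theorem kthEigen_eq_zero_of_lt {d : ℕ} (H : Matrix (Fin d) (Fin d) ℝ) {k : ℕ} (hk : d < k) :
    kthEigen H k = 0 := by
  unfold kthEigen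
  split_ifs
  · exact List.getD_eq_default _ _ (by simp; omega)
  · rfl

theorem kthEigen_of_isHermitian {d : ℕ} {H : Matrix (Fin d) (Fin d) ℝ} (hH : H.IsHermitian)
    (k : ℕ) : kthEigen H k =
      ((Finset.univ.val.map hH.eigenvalues).sort (· ≤ ·)).reverse.getD (k - 1) 0 := by
  rw [kthEigen, dif_pos hH]

open Finset in
theorem le_card_filter_kthEigen_le {d : ℕ} {H : Matrix (Fin d) (Fin d) ℝ} (hH : H.IsHermitian)
    {k : ℕ} (hk : k ≤ d) : k ≤ #{i | kthEigen H k ≤ hH.eigenvalues i} := by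
  rw [kthEigen_of_isHermitian hH]
  have hcount := (univ.val.map hH.eigenvalues).le_countP_sort_reverse_getD_le
    (k := k) (by simpa using hk) 0
  rw [Multiset.countP_map] at hcount
  exact hcount

theorem LinearMap.IsSymmetric.mul_norm_sq_le_inner_map_self_of_mem_span
    {ι E : Type*} [Fintype ι] [NormedAddCommGroup E] [InnerProductSpace ℝ E]
    {T : E →ₗ[ℝ] E} (hT : T.IsSymmetric) (b : OrthonormalBasis ι ℝ E) {eig : ι → ℝ}
    (hb : ∀ i, T (b i) = eig i • b i) {s : Set ι} {μ : ℝ} (hμ : ∀ i ∈ s, μ ≤ eig i)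
    {v : E} (hv : v ∈ Submodule.span ℝ (b '' s)) : μ * ‖v‖ ^ 2 ≤ ⟪v, T v⟫_ℝ := by
  have hcoord : ∀ i ∉ s, ⟪b i, v⟫_ℝ = 0 := by
    intro i hi
    have hperp : b '' s ⊆ (ℝ ∙ b i)ᗮ := by
      rintro _ ⟨j, hj, rfl⟩
      exact Submodule.mem_orthogonal_singleton_iff_inner_right.mpr
        (b.orthonormal.inner_eq_zero (ne_of_mem_of_not_mem hj hi).symm)
    exact Submodule.mem_orthogonal_singleton_iff_inner_right.mp (Submodule.span_le.mpr hperp hv)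
  have hTv : ∀ i, ⟪b i, T v⟫_ℝ = eig i * ⟪b i, v⟫_ℝ := fun i => by
    rw [← hT, hb, real_inner_smul_left]
  rw [← real_inner_self_eq_norm_sq, ← b.sum_inner_mul_inner v v, ← b.sum_inner_mul_inner v (T v),
    Finset.mul_sum]
  refine Finset.sum_le_sum fun i _ => ?_
  rw [hTv, real_inner_comm (b i) v]
  by_cases hi : i ∈ s
  · nlinarith [hμ i hi, mul_self_nonneg ⟪b i, v⟫_ℝ]
  · simp [hcoord i hi]

theorem OrthonormalBasis.finrank_span_image {ι 𝕜 E : Type*} [Fintype ι] [RCLike 𝕜]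
    [NormedAddCommGroup E] [InnerProductSpace 𝕜 E] (b : OrthonormalBasis ι 𝕜 E) (s : Finset ι) :
    Module.finrank 𝕜 (Submodule.span 𝕜 (b '' s)) = s.card := by
  classical
  have hb := b.orthonormal.linearIndependent
  rw [finrank_span_set_eq_card (hb.linearIndepOn _).id_image, Set.toFinset_image,
    Finset.toFinset_coe, Finset.card_image_of_injective _ hb.injective]

theorem Matrix.IsHermitian.toEuclideanLin_eigenvectorBasis {n : Type*} [Fintype n] [DecidableEq n]
    {H : Matrix n n ℝ} (hH : H.IsHermitian) (i : n) :
    Matrix.toEuclideanLin H (hH.eigenvectorBasis i) = hH.eigenvalues i • hH.eigenvectorBasis i := by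
  rw [Matrix.toLpLin_apply, hH.mulVec_eigenvectorBasis, WithLp.toLp_smul, WithLp.toLp_ofLp]

theorem Submodule.exists_mem_ne_zero_map_eq_zero_of_finrank_lt {K V W : Type*} [Field K]
    [AddCommGroup V] [Module K V] [AddCommGroup W] [Module K W] [FiniteDimensional K W]
    (f : V →ₗ[K] W) {U : Submodule K V} [FiniteDimensional K U]
    (h : Module.finrank K W < Module.finrank K U) : ∃ v ∈ U, v ≠ 0 ∧ f v = 0 := by
  obtain ⟨x, hx, hx0⟩ := Submodule.exists_mem_ne_zero_of_ne_bot
    (LinearMap.ker_ne_bot_of_finrank_lt (f := f ∘ₗ U.subtype) h)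
  exact ⟨x, x.2, by simpa using hx0, hx⟩

section Gram

variable {m n : Type*} [Fintype m] [DecidableEq m] [Fintype n] [DecidableEq n]

theorem Matrix.inner_toEuclideanLin_transpose_mul_self (C : Matrix m n ℝ)
    (v : EuclideanSpace ℝ n) :
    ⟪v, Matrix.toEuclideanLin (Cᵀ * C) v⟫_ℝ = ‖Matrix.toEuclideanLin C v‖ ^ 2 := by
  rw [← conjTranspose_eq_transpose_of_trivial, toLpLin_mul 2 2 2, LinearMap.comp_apply,
    toEuclideanLin_conjTranspose_eq_adjoint, LinearMap.adjoint_inner_right,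
    real_inner_self_eq_norm_sq]

theorem Matrix.norm_toEuclideanLin_sq_le_specNorm_transpose_mul_self (C : Matrix m n ℝ)
    (v : EuclideanSpace ℝ n) :
    ‖Matrix.toEuclideanLin C v‖ ^ 2 ≤ specNorm (Cᵀ * C) * ‖v‖ ^ 2 := by
  rw [← C.inner_toEuclideanLin_transpose_mul_self]
  calc _ ≤ ‖v‖ * ‖Matrix.toEuclideanLin (Cᵀ * C) v‖ := real_inner_le_norm _ _
    _ ≤ ‖v‖ * (specNorm (Cᵀ * C) * ‖v‖) :=
        mul_le_mul_of_nonneg_left ((LinearMap.toContinuousLinearMap _).le_opNorm v) (norm_nonneg v)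
    _ = _ := by ring

end Gram

theorem norm_toEuclideanLin_rowSub {n d : ℕ} (A : Matrix (Fin n) (Fin d) ℝ) (S : Finset (Fin n))
    {v : EuclideanSpace ℝ (Fin d)} (hv : ∀ i ∉ S, (A *ᵥ v) i = 0) :
    ‖Matrix.toEuclideanLin (rowSub A S) v‖ = ‖Matrix.toEuclideanLin A v‖ := by
  simp only [EuclideanSpace.norm_eq, Matrix.toLpLin_apply]
  congr 1
  rw [← Finset.sum_subset (Finset.subset_univ S) (fun i _ hi => by simp [hv i hi])]
  exact Finset.sum_coe_sort S fun i => ‖(A *ᵥ v.ofLp) i‖ ^ 2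

open Finset in
/-- For `A ∈ ℝ^{n×d}` and a subset `S ⊆ [n]` of size `m`, the
row-submatrix `A_S` satisfies `‖(A_S)ᵀ A_S‖ ≥ σ(AᵀA, n − m + 1)`. -/
theorem submatrix_gram_norm_ge_interlacing {n d : ℕ}
    (A : Matrix (Fin n) (Fin d) ℝ) (S : Finset (Fin n)) :
    specNorm ((rowSub A S).transpose * rowSub A S) ≥
      kthEigen (A.transpose * A) (n - S.card + 1) := by
  set k := n - #S + 1
  rcases lt_or_ge d k with hdk | hkd
  · rw [kthEigen_eq_zero_of_lt _ hdk]
    exact norm_nonneg _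
  have hH : (Aᵀ * A).IsHermitian := by simpa using A.isHermitian_conjTranspose_mul_self
  set μ := kthEigen (Aᵀ * A) k
  set T : Finset (Fin d) := {i | μ ≤ hH.eigenvalues i}
  set V := Submodule.span ℝ (hH.eigenvectorBasis '' T)
  have hV : k ≤ Module.finrank ℝ V :=
    hH.eigenvectorBasis.finrank_span_image T ▸ le_card_filter_kthEigen_le hH hkd
  let restrictOffS : EuclideanSpace ℝ (Fin d) →ₗ[ℝ] (↥(Sᶜ : Finset (Fin n)) → ℝ) :=
    LinearMap.funLeft ℝ ℝ Subtype.val ∘ₗ A.mulVecLin ∘ₗ (WithLp.linearEquiv 2 ℝ _).toLinearMap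
  obtain ⟨v, hvV, hv0, hvS⟩ := Submodule.exists_mem_ne_zero_map_eq_zero_of_finrank_lt restrictOffS
    (U := V) (by simp; omega)
  have hAv : ∀ i ∉ S, (A *ᵥ v) i = 0 := fun i hi => congrFun hvS ⟨i, by simpa using hi⟩
  have key : μ * ‖v‖ ^ 2 ≤ specNorm ((rowSub A S)ᵀ * rowSub A S) * ‖v‖ ^ 2 :=
    calc μ * ‖v‖ ^ 2 ≤ ⟪v, Matrix.toEuclideanLin (Aᵀ * A) v⟫_ℝ :=
          (Matrix.isSymmetric_toEuclideanLin_iff.mpr hH).mul_norm_sq_le_inner_map_self_of_mem_span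
            hH.eigenvectorBasis hH.toEuclideanLin_eigenvectorBasis (by simp [T]) hvV
      _ = ‖Matrix.toEuclideanLin (rowSub A S) v‖ ^ 2 := by
          rw [A.inner_toEuclideanLin_transpose_mul_self, norm_toEuclideanLin_rowSub A S hAv]
      _ ≤ _ := Matrix.norm_toEuclideanLin_sq_le_specNorm_transpose_mul_self _ v
  exact le_of_mul_le_mul_right key (pow_pos (norm_pos_iff.mpr hv0) 2)
end

section
/- Let A ∈ ℝ^{n×d}, x† ∈ ℝ^d, b := A x†, and let 𝒦 ⊆ ℝ^d be a nonempty closed convex set with x† ∈ 𝒦; let P_𝒦 denote the metric projection onto 𝒦. Let (S_1,…,S_K) be a partition of {1,…,n} into K pairwise disjoint blocks of equal size m = n/K. Suppose L_e > 0 satisfies: for all x ∈ 𝒦, (1/K)·Σ_{k=1}^K ‖(1/m)·Aᵀ(S^k)ᵀS^k A (x − x†)‖₂² ≤ (L_e/n)·‖A(x − x†)‖₂². Suppose μ_c ∈ [0, L_e] satisfies the restricted strong convexity condition (1/n)‖Az‖₂² ≥ μ_c‖z‖₂² for every z of the form z = c(x − x†) with c ≥ 0 and x ∈ 𝒦. Then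 for every x ∈ 𝒦, defining x⁺_k := P_𝒦(x − (1/L_e)·(1/m)·Aᵀ(S^k)ᵀS^k(Ax − b)) for each k ∈ [K], it holds that (1/K)·Σ_{k=1}^K ‖x⁺_k − x†‖₂² ≤ (1 − μ_c/L_e)·‖x − x†‖₂². -/
/-!
Write `e = x - x†` and `g k` for the `k`-th minibatch gradient. Since `x† ∈ 𝒦` and the
projection onto a convex set makes an obtuse angle with every point of the set, projecting
does not increase the distance to `x†`, so it suffices to average
`‖e - g k / L_e‖² = ‖e‖² - (2 / L_e) ⟪g k, e⟫ + ‖g k‖² / L_e²`.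
Because the blocks partition the rows, the cross terms average to `‖A e‖² / n`; expected
smoothness bounds the last term by `‖A e‖² / (n L_e)`, and restricted strong convexity
(with `c = 1`) turns the remaining `-‖A e‖² / (n L_e)` into `-(μ_c / L_e) ‖e‖²`.
-/

open Finset Function
open scoped RealInnerProductSpace

section InnerProductSpace

variable {F : Type*} [NormedAddCommGroup F] [InnerProductSpace ℝ F]

theorem norm_sub_sq_le_of_isMinOn {K : Set F} (hK : Convex ℝ K) {u p w : F} (hp : p ∈ K)
    (hmin : IsMinOn (fun w => ‖u - w‖) K p) (hw : w ∈ K) : ‖p - w‖ ^ 2 ≤ ‖u - w‖ ^ 2 := by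
  have : Nonempty K := ⟨⟨p, hp⟩⟩
  have hinf : ‖u - p‖ = ⨅ w : K, ‖u - w‖ :=
    le_antisymm (le_ciInf fun w => isMinOn_iff.mp hmin w w.2)
      (ciInf_le ⟨0, by rintro _ ⟨w, rfl⟩; exact norm_nonneg _⟩ (⟨p, hp⟩ : K))
  have hobtuse := (norm_eq_iInf_iff_real_inner_le_zero hK hp).mp hinf w hw
  calc ‖p - w‖ ^ 2 = ‖w - p‖ ^ 2 := by rw [norm_sub_rev]
    _ ≤ ‖u - p‖ ^ 2 - 2 * ⟪u - p, w - p⟫ + ‖w - p‖ ^ 2 := by nlinarith [sq_nonneg ‖u - p‖]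
    _ = ‖u - w‖ ^ 2 := by rw [← norm_sub_sq_real, sub_sub_sub_cancel_right]

theorem sum_norm_sub_inv_smul_sq_le {ι : Type*} (s : Finset ι) (e : F) (g : ι → F)
    {L μ q : ℝ} (hL : 0 < L) (hinner : ∑ k ∈ s, ⟪g k, e⟫ = #s * q)
    (hsmooth : ∑ k ∈ s, ‖g k‖ ^ 2 ≤ #s * (L * q)) (hμ : μ * ‖e‖ ^ 2 ≤ q) :
    ∑ k ∈ s, ‖e - L⁻¹ • g k‖ ^ 2 ≤ #s * ((1 - μ / L) * ‖e‖ ^ 2) := by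
  have hexpand : ∑ k ∈ s, ‖e - L⁻¹ • g k‖ ^ 2
      = #s * ‖e‖ ^ 2 - 2 * L⁻¹ * ∑ k ∈ s, ⟪g k, e⟫ + L⁻¹ ^ 2 * ∑ k ∈ s, ‖g k‖ ^ 2 := by
    simp only [norm_sub_sq_real, inner_smul_right, norm_smul, mul_pow, real_inner_comm e,
      sum_add_distrib, sum_sub_distrib, mul_sum, sum_const, nsmul_eq_mul, Real.norm_eq_abs, sq_abs,
      mul_assoc]
  have hdescent : ‖e‖ ^ 2 - L⁻¹ * q ≤ (1 - μ / L) * ‖e‖ ^ 2 := by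
    have := mul_le_mul_of_nonneg_left hμ (inv_nonneg.mpr hL.le)
    rw [div_eq_inv_mul]
    linarith
  calc ∑ k ∈ s, ‖e - L⁻¹ • g k‖ ^ 2
      ≤ #s * ‖e‖ ^ 2 - 2 * L⁻¹ * (#s * q) + L⁻¹ ^ 2 * (#s * (L * q)) := by
        rw [hexpand, hinner]; gcongr
    _ = #s * (‖e‖ ^ 2 - L⁻¹ * q) := by field_simp; ring
    _ ≤ #s * ((1 - μ / L) * ‖e‖ ^ 2) := by gcongr

end InnerProductSpace

theorem EuclideanSpace.norm_toLp_sub_toLp_sq {ι : Type*} [Fintype ι] (u v : ι → ℝ) :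
    ‖(WithLp.toLp 2 u - WithLp.toLp 2 v : EuclideanSpace ℝ ι)‖ ^ 2 = ∑ i, (u i - v i) ^ 2 := by
  simp [EuclideanSpace.real_norm_sq_eq]

theorem Convex.sum_sub_sq_le_of_isNearest {ι : Type*} [Fintype ι] {𝒦 : Set (ι → ℝ)}
    (h𝒦 : Convex ℝ 𝒦) {v p w : ι → ℝ} (hp : p ∈ 𝒦)
    (hnearest : ∀ w ∈ 𝒦, ∑ i, (v i - p i) ^ 2 ≤ ∑ i, (v i - w i) ^ 2) (hw : w ∈ 𝒦) :
    ∑ i, (p i - w i) ^ 2 ≤ ∑ i, (v i - w i) ^ 2 := by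
  simp only [← EuclideanSpace.norm_toLp_sub_toLp_sq]
  refine norm_sub_sq_le_of_isMinOn
    (h𝒦.linear_preimage (WithLp.linearEquiv 2 ℝ (ι → ℝ)).toLinearMap) hp
    (isMinOn_iff.mpr fun w' hw' => ?_) hw
  rw [← sq_le_sq₀ (norm_nonneg _) (norm_nonneg _), ← WithLp.toLp_ofLp 2 w',
    EuclideanSpace.norm_toLp_sub_toLp_sq, EuclideanSpace.norm_toLp_sub_toLp_sq]
  exact hnearest _ hw'

theorem Matrix.sum_sum_mul_mul_eq_sum_mul_mulVec {ι κ R : Type*} [Fintype κ] [CommSemiring R]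
    (A : Matrix ι κ R) (S : Finset ι) (r : ι → R) (e : κ → R) :
    ∑ l, (∑ i ∈ S, A i l * r i) * e l = ∑ i ∈ S, r i * A.mulVec e i := by
  simp only [Matrix.mulVec, dotProduct, sum_mul, mul_sum]
  rw [sum_comm]
  exact sum_congr rfl fun i _ => sum_congr rfl fun l _ => by ring

theorem Matrix.sum_partition_sum_mul_mulVec_mul {ι κ β R : Type*} [Fintype ι] [Fintype κ]
    [Fintype β] [DecidableEq ι] [CommSemiring R] (A : Matrix ι κ R) {S : β → Finset ι}
    (hdisj : Pairwise (Disjoint on S)) (hcover : univ.biUnion S = univ) (c : R) (e : κ → R) :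
    ∑ k, ∑ l, (c * ∑ i ∈ S k, A i l * A.mulVec e i) * e l = c * ∑ i, A.mulVec e i ^ 2 := by
  simp only [mul_assoc, ← mul_sum, A.sum_sum_mul_mul_eq_sum_mul_mulVec, ← sq]
  rw [← hcover, sum_biUnion fun k _ l _ hkl => hdisj hkl]

theorem minibatch_sgd_one_step_contraction_general {n d K m : ℕ} (hK : 0 < K)
    (hnKm : n = K * m)
    (A : Matrix (Fin n) (Fin d) ℝ) (xdag : Fin d → ℝ) (b : Fin n → ℝ)
    (hb : b = A.mulVec xdag)
    (𝒦 : Set (Fin d → ℝ)) (h𝒦conv : Convex ℝ 𝒦) (hxdag : xdag ∈ 𝒦)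
    (P : (Fin d → ℝ) → (Fin d → ℝ))
    (hP : ∀ v, P v ∈ 𝒦 ∧ ∀ w ∈ 𝒦, ∑ l, (v l - P v l) ^ 2 ≤ ∑ l, (v l - w l) ^ 2)
    (S : Fin K → Finset (Fin n))
    (hdisj : ∀ k l : Fin K, k ≠ l → Disjoint (S k) (S l))
    (hcover : (Finset.univ : Finset (Fin K)).biUnion S = Finset.univ)
    (Le : ℝ) (hLe : 0 < Le)
    (hES : ∀ x ∈ 𝒦,
      (1 / (K : ℝ)) * ∑ k : Fin K, ∑ l : Fin d,
          ((1 / (m : ℝ)) * ∑ i ∈ S k, A i l * A.mulVec (x - xdag) i) ^ 2 ≤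
        (Le / n) * ∑ i, (A.mulVec (x - xdag) i) ^ 2)
    (μc : ℝ)
    (hRSC : ∀ x ∈ 𝒦, ∀ c : ℝ, 0 ≤ c →
      μc * ∑ l, (c • (x - xdag)) l ^ 2 ≤
        (1 / (n : ℝ)) * ∑ i, (A.mulVec (c • (x - xdag)) i) ^ 2) :
    ∀ x ∈ 𝒦,
      (1 / (K : ℝ)) * ∑ k : Fin K,
          ∑ l, ((P (fun l' => x l' -
              (1 / Le) * ((1 / (m : ℝ)) * ∑ i ∈ S k, A i l' * (A.mulVec x i - b i)))) l -
            xdag l) ^ 2 ≤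
        (1 - μc / Le) * ∑ l, (x l - xdag l) ^ 2 := by
  intro x hx
  set e := x - xdag
  set Q := ∑ i, A.mulVec e i ^ 2
  set g : Fin K → Fin d → ℝ := fun k l => (1 / (m : ℝ)) * ∑ i ∈ S k, A i l * A.mulVec e i
  have hresidual : ∀ i, A.mulVec x i - b i = A.mulVec e i := by
    simp [e, hb, Matrix.mulVec_sub]
  have hKne : (K : ℝ) ≠ 0 := by positivity
  have hinner : ∑ k, ⟪WithLp.toLp 2 (g k), WithLp.toLp 2 e⟫ = K * (Q / n) := calc
    _ = ∑ k, ∑ l, g k l * e l := by simp [EuclideanSpace.inner_toLp_toLp, dotProduct, mul_comm]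
    _ = 1 / m * Q := A.sum_partition_sum_mul_mulVec_mul hdisj hcover _ e
    _ = K * (Q / n) := by
      rw [hnKm, Nat.cast_mul, mul_div_assoc', mul_div_mul_left _ _ hKne, one_div_mul_eq_div]
  have hsmooth : ∑ k, ‖WithLp.toLp 2 (g k)‖ ^ 2 ≤ K * (Le * (Q / n)) := calc
    _ = K * (1 / K * ∑ k, ∑ l, g k l ^ 2) := by
      simp [EuclideanSpace.real_norm_sq_eq, hKne]
    _ ≤ K * (Le / n * Q) := mul_le_mul_of_nonneg_left (hES x hx) (Nat.cast_nonneg K)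
    _ = K * (Le * (Q / n)) := by ring
  have hrsc : μc * ‖WithLp.toLp 2 e‖ ^ 2 ≤ Q / n := by
    simpa [EuclideanSpace.real_norm_sq_eq, div_eq_inv_mul, e, Q] using hRSC x hx 1 zero_le_one
  have hcard : (#(univ : Finset (Fin K)) : ℝ) = K := by simp
  calc _ ≤ 1 / (K : ℝ) * ∑ k, ‖WithLp.toLp 2 e - Le⁻¹ • WithLp.toLp 2 (g k)‖ ^ 2 := by
        gcongr with k
        refine (h𝒦conv.sum_sub_sq_le_of_isNearest (hP _).1 (hP _).2 hxdag).trans_eq ?_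
        simp only [EuclideanSpace.real_norm_sq_eq, hresidual]
        simp [g, e, sub_right_comm]
    _ ≤ 1 / (K : ℝ) * (#(univ : Finset (Fin K)) * ((1 - μc / Le) * ‖WithLp.toLp 2 e‖ ^ 2)) := by
        gcongr
        exact sum_norm_sub_inv_smul_sq_le _ _ _ hLe (hcard ▸ hinner) (hcard ▸ hsmooth) hrsc
    _ = (1 - μc / Le) * ∑ l, (x l - xdag l) ^ 2 := by
        simp [EuclideanSpace.real_norm_sq_eq, e, hKne]

/-- One-step expected contraction of minibatch projected SGD
with step size `1/L_e` for noiseless constrained least-squares, under expected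
smoothness (at the ground truth) and restricted strong convexity. -/
theorem minibatch_sgd_one_step_contraction {n d K m : ℕ} (hn : 0 < n) (hK : 0 < K)
    (hm : 0 < m) (hnKm : n = K * m)
    (A : Matrix (Fin n) (Fin d) ℝ) (xdag : Fin d → ℝ) (b : Fin n → ℝ)
    (hb : b = A.mulVec xdag)
    (𝒦 : Set (Fin d → ℝ)) (h𝒦conv : Convex ℝ 𝒦) (h𝒦closed : IsClosed 𝒦)
    (h𝒦ne : 𝒦.Nonempty) (hxdag : xdag ∈ 𝒦)
    (P : (Fin d → ℝ) → (Fin d → ℝ))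
    (hP : ∀ v, P v ∈ 𝒦 ∧ ∀ w ∈ 𝒦, ∑ l, (v l - P v l) ^ 2 ≤ ∑ l, (v l - w l) ^ 2)
    (S : Fin K → Finset (Fin n))
    (hdisj : ∀ k l : Fin K, k ≠ l → Disjoint (S k) (S l))
    (hcover : (Finset.univ : Finset (Fin K)).biUnion S = Finset.univ)
    (hcard : ∀ k, (S k).card = m)
    (Le : ℝ) (hLe : 0 < Le)
    (hES : ∀ x ∈ 𝒦,
      (1 / (K : ℝ)) * ∑ k : Fin K, ∑ l : Fin d,
          ((1 / (m : ℝ)) * ∑ i ∈ S k, A i l * A.mulVec (x - xdag) i) ^ 2 ≤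
        (Le / n) * ∑ i, (A.mulVec (x - xdag) i) ^ 2)
    (μc : ℝ) (hμ0 : 0 ≤ μc) (hμLe : μc ≤ Le)
    (hRSC : ∀ x ∈ 𝒦, ∀ c : ℝ, 0 ≤ c →
      μc * ∑ l, (c • (x - xdag)) l ^ 2 ≤
        (1 / (n : ℝ)) * ∑ i, (A.mulVec (c • (x - xdag)) i) ^ 2) :
    ∀ x ∈ 𝒦,
      (1 / (K : ℝ)) * ∑ k : Fin K,
          ∑ l, ((P (fun l' => x l' -
              (1 / Le) * ((1 / (m : ℝ)) * ∑ i ∈ S k, A i l' * (A.mulVec x i - b i)))) l -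
            xdag l) ^ 2 ≤
        (1 - μc / Le) * ∑ l, (x l - xdag l) ^ 2 :=
  minibatch_sgd_one_step_contraction_general hK hnKm A xdag b hb 𝒦 h𝒦conv hxdag P hP S hdisj hcover
    Le hLe hES μc hRSC
end

section
/- Let C ⊆ ℝ^d be a nonempty closed convex cone and let P_C denote the metric projection onto C. Then for every v ∈ ℝ^d, ‖P_C(v)‖₂ = sup{⟨u, v⟩ : u ∈ C, ‖u‖₂ ≤ 1}. -/
/-!
Let `p` be a nearest point of the cone `C` to `v`. Comparing `p` with the point `⟪u, v⟫ • u` of `C`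
for a unit-bounded `u ∈ C` gives `⟪u, v⟫² ≤ ‖v‖² - ‖v - p‖²`. Taking `u = p / ‖p‖` turns this into
`(⟪p, v⟫ - ‖p‖²)² ≤ 0`, so `p ⟂ v - p` and the right-hand side is `‖p‖²`; hence `‖p‖` bounds
`⟪u, v⟫`, and the bound is attained at `u = p / ‖p‖`.
-/

open scoped RealInnerProductSpace

section Cone

variable {E : Type*} [NormedAddCommGroup E] [InnerProductSpace ℝ E] {C : Set E} {u v p : E}

lemma norm_sq_sub_norm_sub_sq (u v : E) : ‖v‖ ^ 2 - ‖v - u‖ ^ 2 = 2 * ⟪u, v⟫ - ‖u‖ ^ 2 := by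
  rw [@norm_sub_sq_real, real_inner_comm]; ring

lemma norm_sub_inner_smul_sq_le (hu : ‖u‖ ≤ 1) :
    ‖v - ⟪u, v⟫ • u‖ ^ 2 ≤ ‖v‖ ^ 2 - ⟪u, v⟫ ^ 2 := by
  have hu2 : ‖u‖ ^ 2 ≤ 1 := pow_le_one₀ (norm_nonneg u) hu
  rw [@norm_sub_sq_real, real_inner_smul_right, norm_smul, mul_pow, Real.norm_eq_abs, sq_abs,
    real_inner_comm]
  nlinarith [sq_nonneg ⟪u, v⟫]

variable (hC : ∀ c : ℝ, 0 ≤ c → ∀ x ∈ C, c • x ∈ C) (hmin : ∀ w ∈ C, ‖v - p‖ ≤ ‖v - w‖)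
include hC hmin

lemma inner_sq_le_of_forall_norm_sub_le (huC : u ∈ C) (hu : ‖u‖ ≤ 1) (huv : 0 ≤ ⟪u, v⟫) :
    ⟪u, v⟫ ^ 2 ≤ ‖v‖ ^ 2 - ‖v - p‖ ^ 2 := by
  have := pow_le_pow_left₀ (norm_nonneg _) (hmin _ (hC _ huv u huC)) 2
  linarith [norm_sub_inner_smul_sq_le (v := v) hu]

lemma inner_eq_norm_sq_of_forall_norm_sub_le (hp : p ∈ C) : ⟪p, v⟫ = ‖p‖ ^ 2 := by
  rcases eq_or_ne p 0 with rfl | hp0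
  · simp
  have hpos : 0 < ‖p‖ := norm_pos_iff.2 hp0
  have hnonneg : 0 ≤ ⟪p, v⟫ := by
    have h0 := pow_le_pow_left₀ (norm_nonneg _) (hmin 0 (by simpa using hC 0 le_rfl p hp)) 2
    rw [sub_zero] at h0
    nlinarith [norm_sq_sub_norm_sub_sq p v, sq_nonneg ‖p‖]
  have hunit := inner_sq_le_of_forall_norm_sub_le hC hmin (u := ‖p‖⁻¹ • p)
    (hC _ (by positivity) p hp) (norm_smul_inv_norm hp0).le
    (by rw [real_inner_smul_left]; positivity)
  rw [real_inner_smul_left, norm_sq_sub_norm_sub_sq, mul_pow, inv_pow,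
    inv_mul_le_iff₀ (by positivity)] at hunit
  have hsq : (⟪p, v⟫ - ‖p‖ ^ 2) ^ 2 ≤ 0 := by linarith
  nlinarith [sq_nonneg (⟪p, v⟫ - ‖p‖ ^ 2)]

theorem isGreatest_inner_of_forall_norm_sub_le (hp : p ∈ C) :
    IsGreatest ((⟪·, v⟫) '' {u | u ∈ C ∧ ‖u‖ ≤ 1}) ‖p‖ := by
  have horth := inner_eq_norm_sq_of_forall_norm_sub_le hC hmin hp
  refine ⟨?_, ?_⟩
  · rcases eq_or_ne p 0 with rfl | hp0
    · exact ⟨0, ⟨by simpa using hC 0 le_rfl _ hp, by simp⟩, by simp⟩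
    refine ⟨‖p‖⁻¹ • p, ⟨hC _ (by positivity) p hp, (norm_smul_inv_norm hp0).le⟩, ?_⟩
    have hpos : 0 < ‖p‖ := norm_pos_iff.2 hp0
    simp only [real_inner_smul_left, horth]
    field_simp
  · rintro _ ⟨u, ⟨huC, hu⟩, rfl⟩
    rcases le_total ⟪u, v⟫ 0 with huv | huv
    · exact huv.trans (norm_nonneg p)
    refine pow_le_pow_iff_left₀ huv (norm_nonneg p) two_ne_zero |>.1 ?_
    have hgap : ‖v‖ ^ 2 - ‖v - p‖ ^ 2 = ‖p‖ ^ 2 := by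
      rw [norm_sq_sub_norm_sub_sq, horth]; ring
    simpa only [hgap] using inner_sq_le_of_forall_norm_sub_le hC hmin huC hu huv

end Cone

theorem cone_projection_norm_eq_sSup_general {d : ℕ}
    (C : Set (Fin d → ℝ))
    (hCcone : ∀ c : ℝ, 0 ≤ c → ∀ x ∈ C, c • x ∈ C)
    (P : (Fin d → ℝ) → (Fin d → ℝ))
    (hP : ∀ v, P v ∈ C ∧ ∀ w ∈ C, ∑ l, (v l - P v l) ^ 2 ≤ ∑ l, (v l - w l) ^ 2) :
    ∀ v : Fin d → ℝ,
      Real.sqrt (∑ l, (P v l) ^ 2) =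
        sSup ((fun u : Fin d → ℝ => ∑ l, u l * v l) ''
          {u | u ∈ C ∧ Real.sqrt (∑ l, (u l) ^ 2) ≤ 1}) := by
  intro v
  obtain ⟨hPC, hPmin⟩ := hP v
  let K : Set (EuclideanSpace ℝ (Fin d)) := WithLp.ofLp ⁻¹' C
  have hnorm (x : Fin d → ℝ) : √(∑ l, x l ^ 2) = ‖WithLp.toLp 2 x‖ := by
    simp [EuclideanSpace.norm_eq]
  have hinner (x y : Fin d → ℝ) : ∑ l, x l * y l = ⟪WithLp.toLp 2 x, WithLp.toLp 2 y⟫ := by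
    simp [PiLp.inner_apply, mul_comm]
  have hset : (fun u : Fin d → ℝ => ∑ l, u l * v l) '' {u | u ∈ C ∧ √(∑ l, u l ^ 2) ≤ 1} =
      (⟪·, WithLp.toLp 2 v⟫) '' {u | u ∈ K ∧ ‖u‖ ≤ 1} := by
    ext y
    simp only [K, Set.mem_image, Set.mem_ofPred_eq, Set.mem_preimage, hnorm, hinner]
    exact ⟨fun ⟨x, hx⟩ => ⟨WithLp.toLp 2 x, hx⟩, fun ⟨x, hx⟩ => ⟨x.ofLp, hx⟩⟩
  have hmin : ∀ w ∈ K, ‖WithLp.toLp 2 v - WithLp.toLp 2 (P v)‖ ≤ ‖WithLp.toLp 2 v - w‖ := by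
    intro w hw
    simpa [← hnorm] using Real.sqrt_le_sqrt (hPmin _ hw)
  have hgreatest := isGreatest_inner_of_forall_norm_sub_le (C := K)
    (fun c hc x hx => hCcone c hc _ hx) hmin hPC
  rw [hset, hnorm, hgreatest.csSup_eq]

/-- For a nonempty closed convex cone `C ⊆ ℝ^d` with metric projection
`P_C`, the Euclidean norm of the projection of any `v` equals the supremum of `⟨u, v⟩`
over `u ∈ C` with `‖u‖₂ ≤ 1`. -/
theorem cone_projection_norm_eq_sSup {d : ℕ}
    (C : Set (Fin d → ℝ)) (hCne : C.Nonempty) (hCclosed : IsClosed C)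
    (hCconv : Convex ℝ C)
    (hCcone : ∀ c : ℝ, 0 ≤ c → ∀ x ∈ C, c • x ∈ C)
    (P : (Fin d → ℝ) → (Fin d → ℝ))
    (hP : ∀ v, P v ∈ C ∧ ∀ w ∈ C, ∑ l, (v l - P v l) ^ 2 ≤ ∑ l, (v l - w l) ^ 2) :
    ∀ v : Fin d → ℝ,
      Real.sqrt (∑ l, (P v l) ^ 2) =
        sSup ((fun u : Fin d → ℝ => ∑ l, u l * v l) ''
          {u | u ∈ C ∧ Real.sqrt (∑ l, (u l) ^ 2) ≤ 1}) :=
  cone_projection_norm_eq_sSup_general C hCcone P hP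
end

section
/- Let D ⊆ ℝ^d be a nonempty closed convex set with 0 ∈ D, and let C ⊆ ℝ^d be a closed convex cone with D ⊆ C. Then for every v ∈ ℝ^d, ‖P_D(v)‖₂ ≤ ‖P_C(v)‖₂, where P_D and P_C denote the Euclidean metric projections onto D and C respectively. -/
/-!
If `p` and `q` are the nearest points to `v` in `D` and in `C`, the variational inequality
at `p`, tested against `0 ∈ D`, gives `‖p‖² ≤ ⟪v, p⟫`. At `q`, testing against `2 • q` (a
point of the cone) turns the variational inequality into `⟪v - q, w⟫ ≤ 0` for every `w ∈ C`,
in particular for `w = p`. Hence `‖p‖² ≤ ⟪v, p⟫ ≤ ⟪q, p⟫ ≤ ‖q‖ ‖p‖`.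
-/

open scoped RealInnerProductSpace

section InnerProductSpace

variable {F : Type*} [NormedAddCommGroup F] [InnerProductSpace ℝ F] {K : Set F} {v p : F}

theorem real_inner_sub_le_zero_of_forall_norm_sub_le (hK : Convex ℝ K) (hp : p ∈ K)
    (hmin : ∀ w ∈ K, ‖v - p‖ ≤ ‖v - w‖) : ∀ w ∈ K, ⟪v - p, w - p⟫ ≤ 0 := by
  have : Nonempty K := ⟨⟨p, hp⟩⟩
  refine (norm_eq_iInf_iff_real_inner_le_zero hK hp).mp
    (le_antisymm (le_ciInf fun w ↦ hmin w w.2) ?_)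
  exact ciInf_le ⟨0, by rintro _ ⟨w, rfl⟩; exact norm_nonneg _⟩ (⟨p, hp⟩ : K)

theorem norm_sq_le_real_inner_of_forall_norm_sub_le (hK : Convex ℝ K) (h0 : 0 ∈ K)
    (hp : p ∈ K) (hmin : ∀ w ∈ K, ‖v - p‖ ≤ ‖v - w‖) : ‖p‖ ^ 2 ≤ ⟪v, p⟫ := by
  have h := real_inner_sub_le_zero_of_forall_norm_sub_le hK hp hmin 0 h0
  rw [zero_sub, inner_neg_right, inner_sub_left, real_inner_self_eq_norm_sq] at h
  linarith

theorem real_inner_sub_le_zero_of_forall_norm_sub_le_of_smul_mem (hK : Convex ℝ K)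
    (hcone : ∀ c : ℝ, 0 ≤ c → ∀ x ∈ K, c • x ∈ K) (hp : p ∈ K)
    (hmin : ∀ w ∈ K, ‖v - p‖ ≤ ‖v - w‖) {w : F} (hw : w ∈ K) : ⟪v - p, w⟫ ≤ 0 := by
  have hvar := real_inner_sub_le_zero_of_forall_norm_sub_le hK hp hmin
  have hp_orth : ⟪v - p, p⟫ ≤ 0 := by
    simpa [two_smul] using hvar (2 • p) (hcone 2 zero_le_two p hp)
  calc ⟪v - p, w⟫ = ⟪v - p, w - p⟫ + ⟪v - p, p⟫ := by rw [← inner_add_right, sub_add_cancel]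
    _ ≤ 0 := add_nonpos (hvar w hw) hp_orth

theorem norm_le_norm_of_forall_norm_sub_le_of_subset_cone {D C : Set F} {q : F}
    (hD : Convex ℝ D) (hD0 : 0 ∈ D) (hC : Convex ℝ C)
    (hCcone : ∀ c : ℝ, 0 ≤ c → ∀ x ∈ C, c • x ∈ C) (hDC : D ⊆ C)
    (hp : p ∈ D) (hpmin : ∀ w ∈ D, ‖v - p‖ ≤ ‖v - w‖)
    (hq : q ∈ C) (hqmin : ∀ w ∈ C, ‖v - q‖ ≤ ‖v - w‖) : ‖p‖ ≤ ‖q‖ := by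
  have hpv : ‖p‖ ^ 2 ≤ ⟪v, p⟫ := norm_sq_le_real_inner_of_forall_norm_sub_le hD hD0 hp hpmin
  have hvq : ⟪v - q, p⟫ ≤ 0 :=
    real_inner_sub_le_zero_of_forall_norm_sub_le_of_smul_mem hC hCcone hq hqmin (hDC hp)
  have hqp : ⟪q, p⟫ ≤ ‖q‖ * ‖p‖ := real_inner_le_norm q p
  rw [inner_sub_left] at hvq
  nlinarith [norm_nonneg p, norm_nonneg q]

end InnerProductSpace

theorem EuclideanSpace.norm_toLp_real {ι : Type*} [Fintype ι] (x : ι → ℝ) :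
    ‖(WithLp.toLp 2 x : EuclideanSpace ℝ ι)‖ = √(∑ i, x i ^ 2) := by
  simp [EuclideanSpace.norm_eq]

theorem EuclideanSpace.forall_norm_sub_le_of_forall_sum_sq_le {ι : Type*} [Fintype ι]
    {K : Set (ι → ℝ)} {v p : ι → ℝ}
    (hmin : ∀ w ∈ K, ∑ i, (v i - p i) ^ 2 ≤ ∑ i, (v i - w i) ^ 2) :
    ∀ w ∈ WithLp.ofLp ⁻¹' K,
      ‖(WithLp.toLp 2 v - WithLp.toLp 2 p : EuclideanSpace ℝ ι)‖ ≤ ‖WithLp.toLp 2 v - w‖ := by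
  intro w hw
  rw [← WithLp.toLp_ofLp (p := 2) w, ← WithLp.toLp_sub, ← WithLp.toLp_sub, norm_toLp_real,
    norm_toLp_real]
  exact Real.sqrt_le_sqrt (hmin _ hw)

theorem projection_norm_le_cone_projection_norm_general {d : ℕ}
    (D C : Set (Fin d → ℝ))
    (hDconv : Convex ℝ D)
    (hD0 : (0 : Fin d → ℝ) ∈ D)
    (hCconv : Convex ℝ C)
    (hCcone : ∀ c : ℝ, 0 ≤ c → ∀ x ∈ C, c • x ∈ C)
    (hDC : D ⊆ C)
    (PD PC : (Fin d → ℝ) → (Fin d → ℝ))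
    (hPD : ∀ v, PD v ∈ D ∧ ∀ w ∈ D, ∑ l, (v l - PD v l) ^ 2 ≤ ∑ l, (v l - w l) ^ 2)
    (hPC : ∀ v, PC v ∈ C ∧ ∀ w ∈ C, ∑ l, (v l - PC v l) ^ 2 ≤ ∑ l, (v l - w l) ^ 2) :
    ∀ v : Fin d → ℝ,
      Real.sqrt (∑ l, (PD v l) ^ 2) ≤ Real.sqrt (∑ l, (PC v l) ^ 2) := by
  intro v
  let e := (WithLp.linearEquiv 2 ℝ (Fin d → ℝ)).toLinearMap
  rw [← EuclideanSpace.norm_toLp_real, ← EuclideanSpace.norm_toLp_real]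
  exact norm_le_norm_of_forall_norm_sub_le_of_subset_cone (v := WithLp.toLp 2 v)
    (hDconv.linear_preimage e) hD0 (hCconv.linear_preimage e)
    (fun c hc _ hx ↦ hCcone c hc _ hx) (fun _ hx ↦ hDC hx)
    (hPD v).1 (EuclideanSpace.forall_norm_sub_le_of_forall_sum_sq_le (hPD v).2)
    (hPC v).1 (EuclideanSpace.forall_norm_sub_le_of_forall_sum_sq_le (hPC v).2)

/-- If `D ⊆ ℝ^d` is a nonempty closed convex set containing `0` and
`C ⊇ D` is a closed convex cone, then the Euclidean metric projections satisfy
`‖P_D(v)‖₂ ≤ ‖P_C(v)‖₂` for every `v`. -/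
theorem projection_norm_le_cone_projection_norm {d : ℕ}
    (D C : Set (Fin d → ℝ))
    (hDne : D.Nonempty) (hDclosed : IsClosed D) (hDconv : Convex ℝ D)
    (hD0 : (0 : Fin d → ℝ) ∈ D)
    (hCclosed : IsClosed C) (hCconv : Convex ℝ C)
    (hCcone : ∀ c : ℝ, 0 ≤ c → ∀ x ∈ C, c • x ∈ C)
    (hDC : D ⊆ C)
    (PD PC : (Fin d → ℝ) → (Fin d → ℝ))
    (hPD : ∀ v, PD v ∈ D ∧ ∀ w ∈ D, ∑ l, (v l - PD v l) ^ 2 ≤ ∑ l, (v l - w l) ^ 2)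
    (hPC : ∀ v, PC v ∈ C ∧ ∀ w ∈ C, ∑ l, (v l - PC v l) ^ 2 ≤ ∑ l, (v l - w l) ^ 2) :
    ∀ v : Fin d → ℝ,
      Real.sqrt (∑ l, (PD v l) ^ 2) ≤ Real.sqrt (∑ l, (PC v l) ^ 2) :=
  projection_norm_le_cone_projection_norm_general D C hDconv hD0 hCconv hCcone hDC PD PC hPD hPC
end
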